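/- The CPTP map E on ℂ²⊗ℂ² with Kraus operators K₀ = |0⟩⟨0|⊗|0⟩⟨0| + |1⟩⟨1|⊗|1⟩⟨0| and K₁ = |0⟩⟨0|⊗|0⟩⟨1| + |1⟩⟨1|⊗|1⟩⟨1| is a valid CPTP map (K₀†K₀ + K₁†K₁ = I), maps every incoherent state on AB to an incoherent state, and satisfies E(|+⟩⟨+| ⊗ |0⟩⟨0|) = |Φ⁺⟩⟨Φ⁺| where |Φ⁺⟩ = (|00⟩+|11⟩)/√2; in particular E is MIO but not QI-preserving, so MIO ⊄ QIP. -/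

import Mathlib

open Matrix Finset
open scoped Kronecker ComplexOrder

/-- A density operator: positive semidefinite with unit trace. -/
def IsDensity {n : Type*} [Fintype n] (ρ : Matrix n n ℂ) : Prop :=
  ρ.PosSemidef ∧ ρ.trace = 1

/-- A quantum-incoherent (QI) state on a bipartite system with quantum part `Q`
and incoherent part `B` (with its fixed reference basis): a state of the form
`∑ j, p j • ρ j ⊗ |j⟩⟨j|`. -/
def IsQI {Q B : Type*} [Fintype Q] [Fintype B] [DecidableEq B]
    (σ : Matrix (Q × B) (Q × B) ℂ) : Prop :=
  ∃ (p : B → ℝ) (ρ : B → Matrix Q Q ℂ),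
    (∀ j, 0 ≤ p j) ∧ (∑ j, p j = 1) ∧ (∀ j, IsDensity (ρ j)) ∧
    σ = ∑ j, (p j : ℂ) • (ρ j ⊗ₖ Matrix.single j j 1)

/-- An incoherent state: a density operator diagonal in the reference basis. -/
def IsIncoherent {n : Type*} [Fintype n] (σ : Matrix n n ℂ) : Prop :=
  IsDensity σ ∧ ∀ x y, x ≠ y → σ x y = 0

/-- The extension `id_k ⊗ E` of a linear map on matrices. -/
def tensId {n m : Type*} (k : Type*)
    (E : Matrix n n ℂ →ₗ[ℂ] Matrix m m ℂ) :
    Matrix (k × n) (k × n) ℂ →ₗ[ℂ] Matrix (k × m) (k × m) ℂ where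
  toFun X := Matrix.of fun p q => E (Matrix.of fun a b => X (p.1, a) (q.1, b)) p.2 q.2
  map_add' X Y := by
    ext p q
    show E (Matrix.of fun a b => (X + Y) (p.1, a) (q.1, b)) p.2 q.2 = _
    rw [show (Matrix.of fun a b => (X + Y) (p.1, a) (q.1, b)) =
        (Matrix.of fun a b => X (p.1, a) (q.1, b)) +
        (Matrix.of fun a b => Y (p.1, a) (q.1, b)) from rfl, map_add]
    rfl
  map_smul' c X := by
    ext p q
    show E (Matrix.of fun a b => (c • X) (p.1, a) (q.1, b)) p.2 q.2 = _
    rw [show (Matrix.of fun a b => (c • X) (p.1, a) (q.1, b)) =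
        c • (Matrix.of fun a b => X (p.1, a) (q.1, b)) from rfl, _root_.map_smul]
    rfl

/-- Complete positivity: `id_k ⊗ E` preserves positive semidefiniteness for all `k`. -/
def IsCompletelyPositive {n m : Type*} [Fintype n] [Fintype m]
    (E : Matrix n n ℂ →ₗ[ℂ] Matrix m m ℂ) : Prop :=
  ∀ (k : ℕ) (X : Matrix (Fin k × n) (Fin k × n) ℂ), X.PosSemidef →
    ((tensId (Fin k) E) X).PosSemidef

/-- A completely positive trace-preserving (CPTP) linear map. -/
def IsCPTP {n m : Type*} [Fintype n] [Fintype m]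
    (E : Matrix n n ℂ →ₗ[ℂ] Matrix m m ℂ) : Prop :=
  IsCompletelyPositive E ∧ ∀ X, (E X).trace = X.trace

/-- The basis density operators `ρ_{a,b}` built from the reference basis. -/
noncomputable def rhoBasis (D : ℕ) (a b : Fin D) : Matrix (Fin D) (Fin D) ℂ :=
  if a = b then Matrix.single a a 1
  else if (a : ℕ) < b then
    (1 / 2 : ℂ) • (Matrix.single a a 1 + Matrix.single a b 1 +
      Matrix.single b a 1 + Matrix.single b b 1)
  else
    (1 / 2 : ℂ) • (Matrix.single a a 1 + (-Complex.I) • Matrix.single a b 1 +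
      Complex.I • Matrix.single b a 1 + Matrix.single b b 1)

/-- `|+⟩⟨+|` on a qubit. -/
noncomputable def plusMat : Matrix (Fin 2) (Fin 2) ℂ := Matrix.of fun _ _ => (1 / 2 : ℂ)

/-- `|0⟩⟨0|` on a qubit. -/
def e00 : Matrix (Fin 2) (Fin 2) ℂ := Matrix.single 0 0 1

/-- The maximally entangled state `|Φ⁺⟩⟨Φ⁺|` on two qubits, `|Φ⁺⟩ = (|00⟩+|11⟩)/√2`. -/
noncomputable def phiMat : Matrix (Fin 2 × Fin 2) (Fin 2 × Fin 2) ℂ :=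
  Matrix.of fun p q => if p.1 = p.2 ∧ q.1 = q.2 then (1 / 2 : ℂ) else 0

/-- Kraus operator `K₀ = |0⟩⟨0| ⊗ |0⟩⟨0| + |1⟩⟨1| ⊗ |1⟩⟨0|`. -/
noncomputable def krausK0 : Matrix (Fin 2 × Fin 2) (Fin 2 × Fin 2) ℂ :=
  Matrix.single 0 0 1 ⊗ₖ Matrix.single 0 0 1 +
    Matrix.single 1 1 1 ⊗ₖ Matrix.single 1 0 1

/-- Kraus operator `K₁ = |0⟩⟨0| ⊗ |0⟩⟨1| + |1⟩⟨1| ⊗ |1⟩⟨1|`. -/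
noncomputable def krausK1 : Matrix (Fin 2 × Fin 2) (Fin 2 × Fin 2) ℂ :=
  Matrix.single 0 0 1 ⊗ₖ Matrix.single 0 1 1 +
    Matrix.single 1 1 1 ⊗ₖ Matrix.single 1 1 1

/-- The CPTP map with Kraus operators `K₀, K₁`. -/
noncomputable def ioMap :
    Matrix (Fin 2 × Fin 2) (Fin 2 × Fin 2) ℂ →ₗ[ℂ]
    Matrix (Fin 2 × Fin 2) (Fin 2 × Fin 2) ℂ where
  toFun X := krausK0 * X * krausK0ᴴ + krausK1 * X * krausK1ᴴ
  map_add' X Y := by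
    simp only [Matrix.mul_add, Matrix.add_mul]
    abel
  map_smul' c X := by
    simp [Matrix.mul_smul, Matrix.smul_mul]

/-!
Both Kraus operators send every product basis vector to a multiple of a product basis vector,
so conjugation by either one keeps diagonal matrices diagonal: the map is MIO. On `|+⟩|0⟩`,
`K₀` acts as a CNOT and yields `|Φ⁺⟩`, while `K₁` annihilates it. But `|Φ⁺⟩⟨Φ⁺|` is not QI:
a QI state vanishes at entries that are off-diagonal on `B`, and the `(00, 11)` entry of
`|Φ⁺⟩⟨Φ⁺|` is `1/2`.
-/

section KrausMaps

variable {n m : Type*}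

def conjMap [Fintype n] (K : Matrix m n ℂ) : Matrix n n ℂ →ₗ[ℂ] Matrix m m ℂ where
  toFun X := K * X * Kᴴ
  map_add' X Y := by rw [Matrix.mul_add, Matrix.add_mul]
  map_smul' c X := by rw [Matrix.mul_smul, Matrix.smul_mul]; rfl

lemma tensId_add (k : Type*) (E F : Matrix n n ℂ →ₗ[ℂ] Matrix m m ℂ) :
    tensId k (E + F) = tensId k E + tensId k F :=
  LinearMap.ext fun _ => rfl

lemma tensId_conjMap [Fintype n] {k : Type*} [Fintype k] [DecidableEq k] (K : Matrix m n ℂ)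
    (X : Matrix (k × n) (k × n) ℂ) :
    tensId k (conjMap K) X = ((1 : Matrix k k ℂ) ⊗ₖ K) * X * ((1 : Matrix k k ℂ) ⊗ₖ K)ᴴ := by
  ext ⟨a, s⟩ ⟨b, t⟩
  change (K * (Matrix.of fun u v => X (a, u) (b, v)) * Kᴴ) s t = _
  simp only [Matrix.mul_apply, Matrix.conjTranspose_apply, Matrix.kroneckerMap_apply,
    Matrix.one_apply, Fintype.sum_prod_type, Matrix.of_apply, ite_mul, mul_ite, zero_mul,
    mul_zero, apply_ite (star : ℂ → ℂ), star_zero, Finset.sum_ite_irrel, Finset.sum_const_zero,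
    Finset.sum_ite_eq, Finset.mem_univ, if_true, one_mul]

lemma IsCompletelyPositive.add [Fintype n] [Fintype m] {E F : Matrix n n ℂ →ₗ[ℂ] Matrix m m ℂ}
    (hE : IsCompletelyPositive E) (hF : IsCompletelyPositive F) :
    IsCompletelyPositive (E + F) := fun k X hX => by
  rw [tensId_add, LinearMap.add_apply]
  exact (hE k X hX).add (hF k X hX)

lemma isCompletelyPositive_conjMap [Fintype n] [Fintype m] (K : Matrix m n ℂ) :
    IsCompletelyPositive (conjMap K) := fun _ X hX => by
    rw [tensId_conjMap]
    exact hX.mul_mul_conjTranspose_same _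

lemma trace_conjMap [Fintype n] [Fintype m] (K : Matrix m n ℂ) (X : Matrix n n ℂ) :
    (conjMap K X).trace = (Kᴴ * K * X).trace := by
  rw [← Matrix.trace_mul_cycle]
  rfl

/-- `K` sends every reference basis vector to a multiple of a reference basis vector. -/
def IsIncoherentOperator (K : Matrix m n ℂ) : Prop :=
  ∀ x p q, K p x ≠ 0 → K q x ≠ 0 → p = q

lemma isIncoherentOperator_of_apply_ne_zero {K : Matrix m n ℂ} (f : n → m)
    (hf : ∀ p x, K p x ≠ 0 → p = f x) : IsIncoherentOperator K :=
  fun x p q hp hq => (hf p x hp).trans (hf q x hq).symm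

lemma IsIncoherentOperator.isDiag_conjMap [Fintype n] {K : Matrix m n ℂ}
    (hK : IsIncoherentOperator K) {D : Matrix n n ℂ} (hD : D.IsDiag) : (conjMap K D).IsDiag := by
  intro p q hpq
  change (K * D * Kᴴ) p q = 0
  classical
  rw [← hD.diagonal_diag, Matrix.mul_apply]
  refine Finset.sum_eq_zero fun x _ => ?_
  rw [Matrix.mul_diagonal, Matrix.conjTranspose_apply]
  by_cases hp : K p x = 0
  · simp [hp]
  · have hq : K q x = 0 := by_contra fun hq => hpq (hK x p q hp hq)
    simp [hq]

end KrausMaps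

lemma IsQI.apply_eq_zero_of_ne {Q B : Type*} [Fintype Q] [Fintype B] [DecidableEq B]
    {σ : Matrix (Q × B) (Q × B) ℂ} (hσ : IsQI σ) (a b : Q) {i j : B} (hij : i ≠ j) :
    σ (a, i) (b, j) = 0 := by
  obtain ⟨p, ρ, -, -, -, rfl⟩ := hσ
  simp only [Matrix.sum_apply, Matrix.smul_apply, Matrix.kroneckerMap_apply, Matrix.single_apply]
  refine Finset.sum_eq_zero fun x _ => ?_
  rw [if_neg fun h => hij (h.1.symm.trans h.2), mul_zero, smul_zero]

lemma isQI_kronecker_single {Q B : Type*} [Fintype Q] [Fintype B] [DecidableEq B]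
    {ρ : Matrix Q Q ℂ} (hρ : IsDensity ρ) (j : B) : IsQI (ρ ⊗ₖ Matrix.single j j 1) := by
  refine ⟨Pi.single j 1, fun _ => ρ, fun i => ?_, by simp, fun _ => hρ, ?_⟩
  · by_cases h : i = j <;> simp [h]
  · rw [Finset.sum_eq_single j (fun i _ hi => by simp [hi]) (by simp)]
    simp

lemma plusMat_eq_smul_vecMulVec : plusMat = (1 / 2 : ℝ) • vecMulVec 1 (star 1) := by
  ext i j
  simp [plusMat, vecMulVec]

lemma isDensity_plusMat : IsDensity plusMat := by
  refine ⟨?_, ?_⟩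
  · rw [plusMat_eq_smul_vecMulVec]
    exact (posSemidef_vecMulVec_self_star 1).smul (by norm_num)
  · norm_num [Matrix.trace, plusMat]

lemma not_isQI_phiMat : ¬ IsQI phiMat := fun h => by
  simpa [phiMat] using h.apply_eq_zero_of_ne 0 1 (i := 0) (j := 1) (by decide)

lemma krausK0_apply_ne_zero (p x : Fin 2 × Fin 2) (h : krausK0 p x ≠ 0) : p = (x.1, x.1) := by
  revert h
  obtain ⟨p1, p2⟩ := p; obtain ⟨x1, x2⟩ := x
  fin_cases p1 <;> fin_cases p2 <;> fin_cases x1 <;> fin_cases x2 <;> simp [krausK0]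

lemma krausK1_apply_ne_zero (p x : Fin 2 × Fin 2) (h : krausK1 p x ≠ 0) : p = (x.1, x.1) := by
  revert h
  obtain ⟨p1, p2⟩ := p; obtain ⟨x1, x2⟩ := x
  fin_cases p1 <;> fin_cases p2 <;> fin_cases x1 <;> fin_cases x2 <;> simp [krausK1]

lemma ioMap_eq_conjMap_add : ioMap = conjMap krausK0 + conjMap krausK1 :=
  LinearMap.ext fun _ => rfl

lemma kraus_complete : krausK0ᴴ * krausK0 + krausK1ᴴ * krausK1 = 1 := by
  ext ⟨a, b⟩ ⟨c, d⟩
  fin_cases a <;> fin_cases b <;> fin_cases c <;> fin_cases d <;>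
    simp [krausK0, krausK1, Matrix.mul_apply, Fintype.sum_prod_type]

lemma trace_ioMap (X : Matrix (Fin 2 × Fin 2) (Fin 2 × Fin 2) ℂ) :
    (ioMap X).trace = X.trace := by
  rw [ioMap_eq_conjMap_add, LinearMap.add_apply, Matrix.trace_add, trace_conjMap, trace_conjMap,
    ← Matrix.trace_add, ← Matrix.add_mul, kraus_complete, Matrix.one_mul]

lemma isCPTP_ioMap : IsCPTP ioMap := by
  refine ⟨?_, trace_ioMap⟩
  rw [ioMap_eq_conjMap_add]
  exact (isCompletelyPositive_conjMap _).add (isCompletelyPositive_conjMap _)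

lemma IsIncoherent.ioMap {σ : Matrix (Fin 2 × Fin 2) (Fin 2 × Fin 2) ℂ} (hσ : IsIncoherent σ) :
    IsIncoherent (ioMap σ) := by
  obtain ⟨⟨hpsd, htr⟩, hdiag⟩ := hσ
  refine ⟨⟨?_, by rw [trace_ioMap, htr]⟩, ?_⟩
  · exact (hpsd.mul_mul_conjTranspose_same _).add (hpsd.mul_mul_conjTranspose_same _)
  · rw [ioMap_eq_conjMap_add, LinearMap.add_apply]
    exact
      ((isIncoherentOperator_of_apply_ne_zero _ krausK0_apply_ne_zero).isDiag_conjMap hdiag).add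
        ((isIncoherentOperator_of_apply_ne_zero _ krausK1_apply_ne_zero).isDiag_conjMap hdiag)

lemma ioMap_plusMat_kronecker_e00 : ioMap (plusMat ⊗ₖ e00) = phiMat := by
  rw [ioMap_eq_conjMap_add]
  ext ⟨a, b⟩ ⟨c, d⟩
  fin_cases a <;> fin_cases b <;> fin_cases c <;> fin_cases d <;>
    simp [conjMap, krausK0, krausK1, plusMat, e00, phiMat, Matrix.mul_apply,
      Fintype.sum_prod_type, Matrix.single_apply]

/-- `ioMap` is a valid CPTP map (`K₀†K₀ + K₁†K₁ = I`), maps every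
incoherent state to an incoherent state (MIO), and maps `|+⟩⟨+| ⊗ |0⟩⟨0|` to the
maximally entangled state `|Φ⁺⟩⟨Φ⁺|`, which is not QI; hence `ioMap` is MIO but not
QI-preserving, so MIO ⊄ QIP. -/
theorem mio_not_subset_qip :
    krausK0ᴴ * krausK0 + krausK1ᴴ * krausK1 = 1 ∧ IsCPTP ioMap ∧
      (∀ σ, IsIncoherent σ → IsIncoherent (ioMap σ)) ∧
      ioMap (plusMat ⊗ₖ e00) = phiMat ∧ ¬ IsQI phiMat ∧
      ¬ (∀ σ, IsQI σ → IsQI (ioMap σ)) := by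
  refine ⟨kraus_complete, isCPTP_ioMap, fun _ => IsIncoherent.ioMap, ioMap_plusMat_kronecker_e00,
    not_isQI_phiMat, fun h => not_isQI_phiMat ?_⟩
  rw [← ioMap_plusMat_kronecker_e00]
  exact h _ (isQI_kronecker_single isDensity_plusMat 0)
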